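/- arXiv:2208.12293 — 5 statements merged into one kernel-verified Lean document; each statement's English description precedes it below -/
import Mathlib

section
/- If f and g are polynomials in K[x_1,...,x_n] over a field K, then the Newton polytope of the product fg equals the Minkowski sum of the Newton polytopes of f and g. -/
open MvPolynomial Pointwise

/-- The Newton polytope of a multivariate polynomial: the convex hull in `ℝ^n` of the
exponent vectors of the monomials with nonzero coefficient. -/
noncomputable def newtonPolytope {n : ℕ} {R : Type*} [CommSemiring R]
    (f : MvPolynomial (Fin n) R) : Set (Fin n → ℝ) :=
  convexHull ℝ ((fun u : Fin n →₀ ℕ => fun i => (u i : ℝ)) '' (f.support : Set (Fin n →₀ ℕ)))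

section aux

variable {n : ℕ}

private noncomputable def expEmb (u : Fin n →₀ ℕ) : Fin n → ℝ := fun i => (u i : ℝ)

private lemma expEmb_inj : Function.Injective (expEmb (n := n)) := by
  intro u v h
  ext i
  have := congrFun h i
  simpa [expEmb] using this

private lemma expEmb_add (u v : Fin n →₀ ℕ) : expEmb (u + v) = expEmb u + expEmb v := by
  funext i
  simp [expEmb]

end aux

/-- (Ostrowski) Over a field, the Newton polytope of a product of polynomials is the
Minkowski sum of the Newton polytopes of the factors. -/
theorem newtonPolytope_mul {n : ℕ} {K : Type*} [Field K]
    (f g : MvPolynomial (Fin n) K) :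
    newtonPolytope (f * g) = newtonPolytope f + newtonPolytope g := by
  classical
  set e : (Fin n →₀ ℕ) → (Fin n → ℝ) := expEmb with he
  set A : Set (Fin n → ℝ) := e '' (f.support : Set (Fin n →₀ ℕ)) with hA
  set B : Set (Fin n → ℝ) := e '' (g.support : Set (Fin n →₀ ℕ)) with hB
  set C : Set (Fin n → ℝ) := e '' ((f * g).support : Set (Fin n →₀ ℕ)) with hC
  have hAB : newtonPolytope f + newtonPolytope g = convexHull ℝ (A + B) := by
    rw [convexHull_add]; rfl
  rw [show newtonPolytope (f * g) = convexHull ℝ C from rfl, hAB]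
  -- The easy inclusion: C ⊆ A + B
  have hCAB : C ⊆ A + B := by
    rintro x ⟨u, hu, rfl⟩
    have hu' : u ∈ f.support + g.support := MvPolynomial.support_mul f g hu
    rw [Finset.mem_add] at hu'
    obtain ⟨p, hp, q, hq, rfl⟩ := hu'
    exact ⟨e p, ⟨p, hp, rfl⟩, e q, ⟨q, hq, rfl⟩, (expEmb_add p q).symm⟩
  refine le_antisymm (convexHull_mono hCAB) ?_
  -- The hard inclusion, via extreme points.
  have hABfin : (A + B).Finite := ((f.support.finite_toSet.image e).add
    (g.support.finite_toSet.image e))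
  set S : Set (Fin n → ℝ) := convexHull ℝ (A + B) with hS
  have hScomp : IsCompact S := hABfin.isCompact_convexHull ℝ
  have hSconv : Convex ℝ S := convex_convexHull ℝ _
  -- every extreme point of S lies in C
  have hext : S.extremePoints ℝ ⊆ C := by
    intro x hx
    have hxAB : x ∈ A + B := extremePoints_convexHull_subset hx
    obtain ⟨a, ha, b, hb, hab⟩ := hxAB
    obtain ⟨u, hu, rfl⟩ := ha
    obtain ⟨v, hv, rfl⟩ := hb
    -- show that the coefficient of u + v in f * g is nonzero
    have hcoeff : MvPolynomial.coeff (u + v) (f * g) ≠ 0 := by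
      rw [MvPolynomial.coeff_mul]
      have hkey : ∀ pq ∈ Finset.HasAntidiagonal.antidiagonal (u + v), pq ≠ (u, v) →
          MvPolynomial.coeff pq.1 f * MvPolynomial.coeff pq.2 g = 0 := by
        rintro ⟨p, q⟩ hpq hne
        by_contra hnz
        have hp : MvPolynomial.coeff p f ≠ 0 := fun h => hnz (by simp [h])
        have hq : MvPolynomial.coeff q g ≠ 0 := fun h => hnz (by simp [h])
        have hpq' : p + q = u + v := Finset.HasAntidiagonal.mem_antidiagonal.1 hpq
        -- y = e p + e v, z = e u + e q; y + z = 2 x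
        set y : Fin n → ℝ := e p + e v with hy
        set z : Fin n → ℝ := e u + e q with hz
        have hyS : y ∈ S := subset_convexHull ℝ _
          ⟨e p, ⟨p, by simpa using hp, rfl⟩, e v, ⟨v, hv, rfl⟩, rfl⟩
        have hzS : z ∈ S := subset_convexHull ℝ _
          ⟨e u, ⟨u, hu, rfl⟩, e q, ⟨q, by simpa using hq, rfl⟩, rfl⟩
        have hsum : y + z = x + x := by
          rw [hy, hz, ← hab]
          have : e p + e q = e u + e v := by
            rw [← expEmb_add, ← expEmb_add, hpq']
          calc e p + e v + (e u + e q) = e p + e q + (e u + e v) := by abel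
            _ = e u + e v + (e u + e v) := by rw [this]
        have hyx : y = x ∧ z = x := by
          by_cases hyz : y = z
          · have : y = x := by
              have h2 : (2 : ℝ) • y = (2 : ℝ) • x := by
                have : y + y = x + x := by rw [← hsum, hyz]
                simpa [two_smul] using this
              have := smul_right_injective (Fin n → ℝ) (by norm_num : (2 : ℝ) ≠ 0) h2
              exact this
            exact ⟨this, by rw [← hyz, this]⟩
          · have hxseg : x ∈ openSegment ℝ y z := by
              refine ⟨1/2, 1/2, by norm_num, by norm_num, by norm_num, ?_⟩
              rw [← smul_add, hsum, ← two_smul ℝ x, smul_smul]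
              norm_num
            exact ⟨hx.2 hyS hzS hxseg, hx.2 hzS hyS (openSegment_symm ℝ y z ▸ hxseg)⟩
        have hpu : p = u := by
          apply expEmb_inj
          have := hyx.1
          rw [hy, ← hab] at this
          exact add_right_cancel this
        have hqv : q = v := by
          apply expEmb_inj
          have := hyx.2
          rw [hz, ← hab] at this
          exact add_left_cancel this
        exact hne (by rw [hpu, hqv])
      rw [Finset.sum_eq_single (u, v) hkey (fun h => absurd (by simp) h)]
      exact mul_ne_zero (by simpa using hu) (by simpa using hv)
    refine ⟨u + v, by simpa using hcoeff, ?_⟩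
    rw [he, expEmb_add]
    exact hab
  -- conclude via Krein–Milman
  have hKM : closure (convexHull ℝ (S.extremePoints ℝ)) = S :=
    closure_convexHull_extremePoints hScomp hSconv
  have hextfin : (S.extremePoints ℝ).Finite :=
    hABfin.subset extremePoints_convexHull_subset
  have hclosed : IsClosed (convexHull ℝ (S.extremePoints ℝ)) :=
    (hextfin.isCompact_convexHull ℝ).isClosed
  rw [← hKM, hclosed.closure_eq]
  exact convexHull_mono hext
end

section
/- The polynomial f(a,b) = a⁴b² + a⁴b − 3a³b² − 3a³b + a²b² + 2a²b − 2ab − a + 1 is irreducible in ℚ[a,b]. -/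
noncomputable section Stmt2Aux
namespace Stmt2Aux
open Polynomial

abbrev R := Polynomial ℚ

def c2 : R := X^4 - 3*X^3 + X^2
def c1 : R := X^4 - 3*X^3 + 2*X^2 - 2*X
def c0 : R := 1 - X
def g : R := X^5 - 6*X^4 + 13*X^3 - 12*X^2 + 8

def p : Polynomial R := C c2 * X^2 + C c1 * X + C c0

lemma disc_eq : c1^2 - 4*(c2*c0) = X^3 * g := by
  unfold c0 c1 c2 g; ring

lemma bezout : c2 + (X^3 - 2*X^2 - X - 1) * c0 = -1 := by
  unfold c0 c2; ring

lemma g_eval : g.eval 0 = 8 := by simp [g]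

lemma g_ne_zero : g ≠ 0 := fun h => by simpa [h] using g_eval

lemma not_square (s : R) : s^2 ≠ X^3 * g := by
  intro h
  have hne : (X^3 * g : R) ≠ 0 := mul_ne_zero (pow_ne_zero _ X_ne_zero) g_ne_zero
  have h1 : rootMultiplicity 0 (s^2) = 2 * rootMultiplicity 0 s := by
    rw [pow_two, rootMultiplicity_mul (by rw [← pow_two, h]; exact hne), two_mul]
  have hX : rootMultiplicity 0 ((X:R)^3) = 3 := by
    have : ((X : R) - C 0)^3 = X^3 := by simp
    rw [← this, rootMultiplicity_X_sub_C_pow]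
  have hg : rootMultiplicity 0 g = 0 :=
    rootMultiplicity_eq_zero (by simp [IsRoot, g_eval])
  have h2 : rootMultiplicity 0 ((X:R)^3 * g) = 3 := by
    rw [rootMultiplicity_mul hne, hX, hg]
  rw [h, h2] at h1
  omega

lemma p_primitive : p.IsPrimitive := by
  intro r hr
  rw [C_dvd_iff_dvd_coeff] at hr
  have h0 : r ∣ c0 := by simpa [p, coeff_one] using hr 0
  have h2 : r ∣ c2 := by
    have := hr 2
    simpa [p, coeff_one] using this
  have : r ∣ (-1 : R) := by
    rw [← bezout]
    exact dvd_add h2 (Dvd.dvd.mul_left h0 _)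
  exact isUnit_of_dvd_one (dvd_neg.mp this)

abbrev K := FractionRing R
local notation "A" => algebraMap R K

lemma A_inj : Function.Injective A := IsFractionRing.injective R K

lemma pK_eq : p.map A = C (A c2) * X^2 + C (A c1) * X + C (A c0) := by
  simp [p, Polynomial.map_add, Polynomial.map_mul, Polynomial.map_pow]

lemma c2K_ne : A c2 ≠ 0 := by
  intro h
  have : c2 ≠ 0 := by
    intro h0
    have : (c2.eval 1) = -1 := by simp [c2]; norm_num
    rw [h0] at this; simp at this
  exact this (A_inj (by simpa using h))

lemma pK_natDegree : (p.map A).natDegree = 2 := by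
  rw [pK_eq]; exact natDegree_quadratic c2K_ne

lemma no_root (x : K) : ¬ (p.map A).IsRoot x := by
  intro hx
  have hev : A c2 * x^2 + A c1 * x + A c0 = 0 := by
    have := hx
    rw [pK_eq] at this
    simpa [IsRoot] using this
  set r : K := 2 * A c2 * x + A c1 with hr
  have hr2 : r^2 = A (X^3 * g) := by
    rw [← disc_eq, map_sub, map_mul, map_pow, map_mul]
    have h4 : (A 4 : K) = 4 := by simp [map_ofNat]
    rw [h4]
    linear_combination (4 * A c2) * hev
  have hint : IsIntegral R r := by
    refine ⟨Polynomial.X^2 - C (X^3 * g), monic_X_pow_sub_C _ (by norm_num), ?_⟩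
    simp [eval₂_sub, eval₂_pow, hr2]
  obtain ⟨s, hs⟩ := IsIntegrallyClosed.isIntegral_iff.mp hint
  apply not_square s
  apply A_inj
  rw [map_pow, hs, hr2]

lemma p_irred : Irreducible p := by
  rw [p_primitive.irreducible_iff_irreducible_map_fraction_map (K := K)]
  rw [irreducible_iff_roots_eq_zero_of_degree_le_three (by rw [pK_natDegree])
    (by rw [pK_natDegree]; norm_num)]
  have hpne : p.map A ≠ 0 := fun h0 => by simpa [h0] using pK_natDegree
  by_contra hne
  obtain ⟨x, hx⟩ := Multiset.exists_mem_of_ne_zero hne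
  exact no_root x ((mem_roots hpne).mp hx)

def E : MvPolynomial (Fin 2) ℚ ≃ₐ[ℚ] Polynomial R :=
  ((MvPolynomial.renameEquiv ℚ (Equiv.swap 0 1)).trans (MvPolynomial.finSuccEquiv ℚ 1)).trans
    (Polynomial.mapAlgEquiv ((MvPolynomial.finSuccEquiv ℚ 0).trans
      (Polynomial.mapAlgEquiv (MvPolynomial.isEmptyAlgEquiv ℚ (Fin 0)))))

lemma succ_X :
    MvPolynomial.finSuccEquiv ℚ 1 (MvPolynomial.X 1) = Polynomial.C (MvPolynomial.X 0) := by
  have : (1 : Fin 2) = Fin.succ 0 := rfl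
  rw [this, MvPolynomial.finSuccEquiv_X_succ]

lemma hE0 : E (MvPolynomial.X 0) = Polynomial.C Polynomial.X := by
  simp [E, succ_X, MvPolynomial.finSuccEquiv_X_zero]

lemma hE1 : E (MvPolynomial.X 1) = Polynomial.X := by
  simp [E, succ_X, MvPolynomial.finSuccEquiv_X_zero]

lemma key :
    E ((MvPolynomial.X 0)^4 * (MvPolynomial.X 1)^2 + (MvPolynomial.X 0)^4 * (MvPolynomial.X 1)
      - 3 * (MvPolynomial.X 0)^3 * (MvPolynomial.X 1)^2
      - 3 * (MvPolynomial.X 0)^3 * (MvPolynomial.X 1)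
      + (MvPolynomial.X 0)^2 * (MvPolynomial.X 1)^2 + 2 * (MvPolynomial.X 0)^2 * (MvPolynomial.X 1)
      - 2 * (MvPolynomial.X 0) * (MvPolynomial.X 1) - MvPolynomial.X 0 + 1) = p := by
  simp only [map_add, map_sub, map_mul, map_pow, map_one, map_ofNat, hE0, hE1]
  unfold p c0 c1 c2
  simp only [map_sub, map_add, map_mul, map_pow, map_one, map_ofNat]
  ring

end Stmt2Aux
end Stmt2Aux

open MvPolynomial

/-- The polynomial `a⁴b² + a⁴b − 3a³b² − 3a³b + a²b² + 2a²b − 2ab − a + 1`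
(with `a = X 0`, `b = X 1`) is irreducible in `ℚ[a,b]`. -/
theorem stmt2 :
    Irreducible
      ((X 0)^4 * (X 1)^2 + (X 0)^4 * (X 1) - 3 * (X 0)^3 * (X 1)^2 - 3 * (X 0)^3 * (X 1)
        + (X 0)^2 * (X 1)^2 + 2 * (X 0)^2 * (X 1) - 2 * (X 0) * (X 1) - X 0 + 1 :
        MvPolynomial (Fin 2) ℚ) := by
  exact (MulEquiv.irreducible_iff Stmt2Aux.E).mp (Stmt2Aux.key ▸ Stmt2Aux.p_irred)
end

section
/- The polynomial f(a,b) = a⁴b² + a⁴b − 3a³b² − 3a³b + a²b² + 2a²b − 2ab − a + 1 is irreducible in ℂ[a,b] (absolutely irreducible). -/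
set_option maxHeartbeats 1000000
set_option synthInstance.maxHeartbeats 400000
set_option maxRecDepth 8000


open MvPolynomial

noncomputable section Stmt4Aux

namespace Stmt4Aux

abbrev R : Type := Polynomial ℂ

def c2 : R := Polynomial.X ^ 4 - 3 * Polynomial.X ^ 3 + Polynomial.X ^ 2
def c1 : R := Polynomial.X ^ 4 - 3 * Polynomial.X ^ 3 + 2 * Polynomial.X ^ 2 - 2 * Polynomial.X
def c0 : R := 1 - Polynomial.X

def q : Polynomial R :=
  Polynomial.C c2 * Polynomial.X ^ 2 + Polynomial.C c1 * Polynomial.X + Polynomial.C c0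

lemma hc2_ne : c2 ≠ 0 := by
  intro h
  have h2 := congrArg (Polynomial.eval 1) h
  simp [c2] at h2
  norm_num at h2

/-- The discriminant `c1² - 4 c2 c0 = X³(X⁵-6X⁴+13X³-12X²+8)` is not a square in `ℂ[X]`. -/
lemma not_sq (h : R) : h ^ 2 ≠ c1 ^ 2 - 4 * (c2 * c0) := by
  intro heq
  set g : R := Polynomial.X ^ 5 + Polynomial.C (-6) * Polynomial.X ^ 4
      + Polynomial.C 13 * Polynomial.X ^ 3 + Polynomial.C (-12) * Polynomial.X ^ 2
      + Polynomial.C 8 with hg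
  have hD : c1 ^ 2 - 4 * (c2 * c0) = Polynomial.X ^ 3 * g := by
    simp only [c1, c2, c0, hg, map_neg, map_ofNat]
    ring
  rw [hD] at heq
  have hXh : (Polynomial.X : R) ∣ h := by
    refine Polynomial.prime_X.dvd_of_dvd_pow (n := 2) ?_
    exact ⟨Polynomial.X ^ 2 * g, by rw [heq]; ring⟩
  obtain ⟨k, rfl⟩ := hXh
  have hk : k ^ 2 = Polynomial.X * g := by
    have h2 : (Polynomial.X : R) ^ 2 * k ^ 2 = Polynomial.X ^ 2 * (Polynomial.X * g) := by
      linear_combination heq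
    exact mul_left_cancel₀ (pow_ne_zero 2 Polynomial.X_ne_zero) h2
  have hXk : (Polynomial.X : R) ∣ k :=
    Polynomial.prime_X.dvd_of_dvd_pow (n := 2) ⟨g, hk⟩
  obtain ⟨m, rfl⟩ := hXk
  have hm : Polynomial.X * m ^ 2 = g := by
    have h2 : (Polynomial.X : R) * (Polynomial.X * m ^ 2) = Polynomial.X * g := by
      linear_combination hk
    exact mul_left_cancel₀ Polynomial.X_ne_zero h2
  have h0 := congrArg (fun p => Polynomial.coeff p 0) hm
  simp [hg, Polynomial.coeff_X_pow, Polynomial.coeff_X_zero, Polynomial.mul_coeff_zero] at h0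

lemma hq_prim : q.IsPrimitive := by
  intro r hr
  obtain ⟨t, ht⟩ := hr
  have h0 : r ∣ c0 := by
    refine ⟨t.coeff 0, ?_⟩
    have := congrArg (fun p => Polynomial.coeff p 0) ht
    simpa [q, Polynomial.coeff_X_pow] using this
  have h1 : r ∣ c1 := by
    refine ⟨t.coeff 1, ?_⟩
    have := congrArg (fun p => Polynomial.coeff p 1) ht
    simpa [q, Polynomial.coeff_X_pow] using this
  have hdvd : r ∣ (-2 : R) := by
    have key : (-2 : R) = c1 + (Polynomial.X ^ 3 - 2 * Polynomial.X ^ 2 - 2) * c0 := by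
      simp only [c1, c0]; ring
    rw [key]
    exact dvd_add h1 (h0.mul_left _)
  have hu : IsUnit (-2 : R) := by
    rw [show (-2 : R) = Polynomial.C (-2) by rw [map_neg, map_ofNat]]
    exact Polynomial.isUnit_C.mpr (by norm_num)
  exact isUnit_of_dvd_unit hdvd hu

abbrev K : Type := FractionRing R

lemma hdiscrim (s : K) :
    discrim (algebraMap R K c2) (algebraMap R K c1) (algebraMap R K c0) ≠ s ^ 2 := by
  intro hs
  rw [discrim] at hs
  have hs' : s ^ 2 = algebraMap R K (c1 ^ 2 - 4 * (c2 * c0)) := by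
    rw [← hs]
    push_cast [map_sub, map_mul, map_pow, map_ofNat]
    ring
  have hint : IsIntegral R s := by
    refine ⟨Polynomial.X ^ 2 - Polynomial.C (c1 ^ 2 - 4 * (c2 * c0)),
      Polynomial.monic_X_pow_sub_C _ (by norm_num), ?_⟩
    simp [Polynomial.eval₂_sub, Polynomial.eval₂_pow, hs']
  obtain ⟨h, hh⟩ := IsIntegrallyClosed.isIntegral_iff.mp hint
  apply not_sq h
  apply IsFractionRing.injective R K
  rw [map_pow, hh, hs']

lemma hq_irr : Irreducible q := by
  rw [Polynomial.IsPrimitive.irreducible_iff_irreducible_map_fraction_map (K := K) hq_prim]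
  have hmap : q.map (algebraMap R K)
      = Polynomial.C (algebraMap R K c2) * Polynomial.X ^ 2
        + Polynomial.C (algebraMap R K c1) * Polynomial.X
        + Polynomial.C (algebraMap R K c0) := by
    simp [q]
  have hc2' : algebraMap R K c2 ≠ 0 := fun h =>
    hc2_ne ((map_eq_zero_iff _ (IsFractionRing.injective R K)).mp h)
  have hdeg : (q.map (algebraMap R K)).natDegree = 2 := by
    rw [hmap]
    compute_degree!
    exact hc2_ne
  rw [Polynomial.irreducible_iff_roots_eq_zero_of_degree_le_three (by omega) (by omega)]
  refine Multiset.eq_zero_of_forall_notMem fun x hx => ?_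
  have hne : q.map (algebraMap R K) ≠ 0 := fun h => by simp [h] at hdeg
  rw [Polynomial.mem_roots hne] at hx
  have heval : (q.map (algebraMap R K)).eval x
      = algebraMap R K c2 * (x * x) + algebraMap R K c1 * x + algebraMap R K c0 := by
    rw [hmap]
    simp only [Polynomial.eval_add, Polynomial.eval_mul, Polynomial.eval_pow,
      Polynomial.eval_C, Polynomial.eval_X]
    ring
  exact quadratic_ne_zero_of_discrim_ne_sq hdiscrim x (heval ▸ hx)

def e : MvPolynomial (Fin 2) ℂ ≃ₐ[ℂ] Polynomial R :=
  (renameEquiv ℂ (Equiv.swap 0 1)).trans <|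
    (finSuccEquiv ℂ 1).trans <|
      Polynomial.mapAlgEquiv <|
        (finSuccEquiv ℂ 0).trans <| Polynomial.mapAlgEquiv (isEmptyAlgEquiv ℂ (Fin 0))

lemma he0 : e (X 0) = Polynomial.C Polynomial.X := by
  rw [e]
  simp only [AlgEquiv.trans_apply, renameEquiv_apply, rename_X, Equiv.swap_apply_left]
  rw [show (1 : Fin 2) = Fin.succ 0 from rfl, finSuccEquiv_X_succ]
  simp only [Polynomial.coe_mapAlgEquiv, Polynomial.map_C, AlgEquiv.trans_apply,
    finSuccEquiv_X_zero, Polynomial.map_X, RingHom.coe_coe]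

lemma he1 : e (X 1) = Polynomial.X := by
  rw [e]
  simp only [AlgEquiv.trans_apply, renameEquiv_apply, rename_X, Equiv.swap_apply_right,
    finSuccEquiv_X_zero, Polynomial.coe_mapAlgEquiv, Polynomial.map_X, RingHom.coe_coe]

lemma hef :
    e ((X 0)^4 * (X 1)^2 + (X 0)^4 * (X 1) - 3 * (X 0)^3 * (X 1)^2 - 3 * (X 0)^3 * (X 1)
        + (X 0)^2 * (X 1)^2 + 2 * (X 0)^2 * (X 1) - 2 * (X 0) * (X 1) - X 0 + 1) = q := by
  simp only [map_add, map_sub, map_mul, map_pow, map_one, map_ofNat, he0, he1]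
  simp only [q, c2, c1, c0, map_sub, map_add, map_mul, map_pow, map_one, map_ofNat]
  ring

end Stmt4Aux

end Stmt4Aux

open Stmt4Aux in
/-- The polynomial `a⁴b² + a⁴b − 3a³b² − 3a³b + a²b² + 2a²b − 2ab − a + 1`
(with `a = X 0`, `b = X 1`) is irreducible in `ℂ[a,b]`, i.e. absolutely irreducible. -/
theorem stmt4 :
    Irreducible
      ((X 0)^4 * (X 1)^2 + (X 0)^4 * (X 1) - 3 * (X 0)^3 * (X 1)^2 - 3 * (X 0)^3 * (X 1)
        + (X 0)^2 * (X 1)^2 + 2 * (X 0)^2 * (X 1) - 2 * (X 0) * (X 1) - X 0 + 1 :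
        MvPolynomial (Fin 2) ℂ) := by
  have := hef ▸ hq_irr
  exact (MulEquiv.irreducible_iff (Stmt4Aux.e : MvPolynomial (Fin 2) ℂ ≃ₐ[ℂ] Polynomial R)).mp this
end

section
/- The Fano plane is not geometrically realizable by lines in ℂP²: there is no collection of 7 distinct complex projective lines ℓ_1,...,ℓ_7 such that for every subset S ⊆ {1,...,7} with |S| ≥ 3, the intersection ⋂_{i∈S} ℓ_i is nonempty if and only if the corresponding lines of the Fano plane have a common point. -/
/-- The lines of the Fano plane, each given as the set of (indices of) points it contains:
`L₁ = {P₁,P₂,P₃}, L₂ = {P₁,P₄,P₅}, L₃ = {P₁,P₆,P₇}, L₄ = {P₂,P₄,P₆}, L₅ = {P₂,P₅,P₇},`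
`L₆ = {P₃,P₄,P₇}, L₇ = {P₃,P₅,P₆}` (with points indexed `0,…,6`). -/
def fanoLines : Fin 7 → Finset (Fin 7) :=
  ![{0, 1, 2}, {0, 3, 4}, {0, 5, 6}, {1, 3, 5}, {1, 4, 6}, {2, 3, 6}, {2, 4, 5}]

/-- The Fano plane is not geometrically realizable by lines in `ℂP²`: there is no collection
of 7 distinct complex projective lines (given by their dual points in the projectivization of
`ℂ³`) such that for every subset `S` of size at least 3, the lines indexed by `S` have a
common point if and only if the corresponding Fano lines have a common point. -/
theorem stmt9 :
    ¬ ∃ ℓ : Fin 7 → Projectivization ℂ (Fin 3 → ℂ),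
      Function.Injective ℓ ∧
      ∀ S : Finset (Fin 7), 3 ≤ S.card →
        ((∃ p : Projectivization ℂ (Fin 3 → ℂ),
            ∀ i ∈ S, dotProduct p.rep (ℓ i).rep = 0) ↔
          (∃ P : Fin 7, ∀ i ∈ S, P ∈ fanoLines i)) := by
  rintro ⟨ℓ, -, h⟩
  set v : Fin 7 → Fin 3 → ℂ := fun i => (ℓ i).rep with hv
  -- a triple of dual points admits a common incident point iff the corresponding
  -- determinant vanishes
  have step : ∀ N : Matrix (Fin 3) (Fin 3) ℂ,
      (∃ p : Projectivization ℂ (Fin 3 → ℂ),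
        ∀ m : Fin 3, dotProduct p.rep (N m) = 0) ↔ N.det = 0 := by
    intro N
    rw [← Matrix.exists_mulVec_eq_zero_iff]
    constructor
    · rintro ⟨p, hp⟩
      refine ⟨p.rep, p.rep_nonzero, funext fun m => ?_⟩
      simpa [Matrix.mulVec, dotProduct_comm] using hp m
    · rintro ⟨u, hu, hmu⟩
      refine ⟨Projectivization.mk ℂ u hu, fun m => ?_⟩
      obtain ⟨a, ha⟩ := Projectivization.exists_smul_eq_mk_rep ℂ u hu
      rw [← ha, Units.smul_def, smul_dotProduct]
      have h0 : N.mulVec u m = 0 := by rw [hmu]; rfl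
      rw [Matrix.mulVec, dotProduct_comm] at h0
      rw [h0, smul_zero]
  have key : ∀ i j k : Fin 7, i ≠ j → i ≠ k → j ≠ k →
      ((Matrix.of ![v i, v j, v k]).det = 0 ↔
        ∃ P : Fin 7, P ∈ fanoLines i ∧ P ∈ fanoLines j ∧ P ∈ fanoLines k) := by
    intro i j k hij hik hjk
    have hcard : ({i, j, k} : Finset (Fin 7)).card = 3 :=
      Finset.card_eq_three.mpr ⟨i, j, k, hij, hik, hjk, rfl⟩
    have hS := h {i, j, k} (le_of_eq hcard.symm)
    have hA : (∃ p : Projectivization ℂ (Fin 3 → ℂ),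
        ∀ m : Fin 3, dotProduct p.rep (Matrix.of ![v i, v j, v k] m) = 0) ↔
        (∃ p : Projectivization ℂ (Fin 3 → ℂ),
          ∀ m ∈ ({i, j, k} : Finset (Fin 7)), dotProduct p.rep (ℓ m).rep = 0) := by
      refine exists_congr fun pp => ?_
      constructor
      · intro hp m hm
        simp only [Finset.mem_insert, Finset.mem_singleton] at hm
        rcases hm with rfl | rfl | rfl
        · exact hp 0
        · exact hp 1
        · exact hp 2
      · intro hp m
        fin_cases m
        · exact hp i (by simp)
        · exact hp j (by simp)
        · exact hp k (by simp)
    have hB : (∃ P : Fin 7, ∀ m ∈ ({i, j, k} : Finset (Fin 7)), P ∈ fanoLines m) ↔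
        (∃ P : Fin 7, P ∈ fanoLines i ∧ P ∈ fanoLines j ∧ P ∈ fanoLines k) := by
      refine exists_congr fun P => ?_
      simp [Finset.mem_insert, Finset.mem_singleton]
    rw [← step (Matrix.of ![v i, v j, v k])]
    exact hA.trans (hS.trans hB)
  have dz : ∀ i j k : Fin 7, i ≠ j → i ≠ k → j ≠ k →
      (∃ P : Fin 7, P ∈ fanoLines i ∧ P ∈ fanoLines j ∧ P ∈ fanoLines k) →
      (Matrix.of ![v i, v j, v k]).det = 0 :=
    fun i j k hij hik hjk hP => (key i j k hij hik hjk).mpr hP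
  have dn : ∀ i j k : Fin 7, i ≠ j → i ≠ k → j ≠ k →
      ¬(∃ P : Fin 7, P ∈ fanoLines i ∧ P ∈ fanoLines j ∧ P ∈ fanoLines k) →
      (Matrix.of ![v i, v j, v k]).det ≠ 0 :=
    fun i j k hij hik hjk hP H => hP ((key i j k hij hik hjk).mp H)
  -- normalize so that the dual points of lines 1, 2, 3 become the standard basis
  set M : Matrix (Fin 3) (Fin 3) ℂ := Matrix.of ![v 1, v 2, v 3] with hM
  have hMdet : M.det ≠ 0 := dn 1 2 3 (by decide) (by decide) (by decide) (by decide)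
  have hMu : IsUnit M.det := Ne.isUnit hMdet
  have hMM : M * M⁻¹ = 1 := Matrix.mul_nonsing_inv M hMu
  have hinvdet : M⁻¹.det ≠ 0 :=
    left_ne_zero_of_mul_eq_one (Matrix.det_nonsing_inv_mul_det M hMu)
  set w : Fin 7 → Fin 3 → ℂ := fun i => Matrix.vecMul (v i) M⁻¹ with hw
  have hdetw : ∀ i j k : Fin 7,
      (Matrix.of ![w i, w j, w k]).det = (Matrix.of ![v i, v j, v k]).det * M⁻¹.det := by
    intro i j k
    have hE : Matrix.of ![w i, w j, w k] = Matrix.of ![v i, v j, v k] * M⁻¹ := by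
      ext r c
      fin_cases r <;>
        simp [hw, Matrix.mul_apply, Matrix.vecMul, dotProduct]
    rw [hE, Matrix.det_mul]
  have wz : ∀ i j k : Fin 7, i ≠ j → i ≠ k → j ≠ k →
      (∃ P : Fin 7, P ∈ fanoLines i ∧ P ∈ fanoLines j ∧ P ∈ fanoLines k) →
      (Matrix.of ![w i, w j, w k]).det = 0 := by
    intro i j k hij hik hjk hP
    rw [hdetw, dz i j k hij hik hjk hP, zero_mul]
  have wn : ∀ i j k : Fin 7, i ≠ j → i ≠ k → j ≠ k →
      ¬(∃ P : Fin 7, P ∈ fanoLines i ∧ P ∈ fanoLines j ∧ P ∈ fanoLines k) →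
      (Matrix.of ![w i, w j, w k]).det ≠ 0 := by
    intro i j k hij hik hjk hP
    rw [hdetw]
    exact mul_ne_zero (dn i j k hij hik hjk hP) hinvdet
  have hw1 : ∀ c, w 1 c = (1 : Matrix (Fin 3) (Fin 3) ℂ) 0 c := by
    intro c
    rw [← hMM]
    simp [hw, hM, Matrix.vecMul, dotProduct, Matrix.mul_apply]
  have hw2 : ∀ c, w 2 c = (1 : Matrix (Fin 3) (Fin 3) ℂ) 1 c := by
    intro c
    rw [← hMM]
    simp [hw, hM, Matrix.vecMul, dotProduct, Matrix.mul_apply]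
  have hw3 : ∀ c, w 3 c = (1 : Matrix (Fin 3) (Fin 3) ℂ) 2 c := by
    intro c
    rw [← hMM]
    simp [hw, hM, Matrix.vecMul, dotProduct, Matrix.mul_apply]
  have hw1' : w 1 = ![1, 0, 0] := by
    funext c; rw [hw1]; fin_cases c <;> simp [Matrix.one_apply]
  have hw2' : w 2 = ![0, 1, 0] := by
    funext c; rw [hw2]; fin_cases c <;> simp [Matrix.one_apply]
  have hw3' : w 3 = ![0, 0, 1] := by
    funext c; rw [hw3]; fin_cases c <;> simp [Matrix.one_apply]
  -- closed forms of the relevant determinants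
  have D012 : (Matrix.of ![w 0, w 1, w 2]).det = w 0 2 := by
    rw [Matrix.det_fin_three]
    simp only [Matrix.of_apply, Matrix.cons_val', Matrix.cons_val_zero, Matrix.cons_val_one,
      Matrix.head_cons, Matrix.empty_val', Matrix.cons_val_fin_one, Matrix.head_fin_const,
      Matrix.cons_val_two, Matrix.tail_cons, hw1', hw2', hw3']
    ring
  have D034 : (Matrix.of ![w 0, w 3, w 4]).det = -(w 0 0 * w 4 1) + w 0 1 * w 4 0 := by
    rw [Matrix.det_fin_three]
    simp only [Matrix.of_apply, Matrix.cons_val', Matrix.cons_val_zero, Matrix.cons_val_one,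
      Matrix.head_cons, Matrix.empty_val', Matrix.cons_val_fin_one, Matrix.head_fin_const,
      Matrix.cons_val_two, Matrix.tail_cons, hw1', hw2', hw3']
    ring
  have D135 : (Matrix.of ![w 1, w 3, w 5]).det = -(w 5 1) := by
    rw [Matrix.det_fin_three]
    simp only [Matrix.of_apply, Matrix.cons_val', Matrix.cons_val_zero, Matrix.cons_val_one,
      Matrix.head_cons, Matrix.empty_val', Matrix.cons_val_fin_one, Matrix.head_fin_const,
      Matrix.cons_val_two, Matrix.tail_cons, hw1', hw2', hw3']
    ring
  have D245 : (Matrix.of ![w 2, w 4, w 5]).det = w 4 2 * w 5 0 - w 4 0 * w 5 2 := by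
    rw [Matrix.det_fin_three]
    simp only [Matrix.of_apply, Matrix.cons_val', Matrix.cons_val_zero, Matrix.cons_val_one,
      Matrix.head_cons, Matrix.empty_val', Matrix.cons_val_fin_one, Matrix.head_fin_const,
      Matrix.cons_val_two, Matrix.tail_cons, hw1', hw2', hw3']
    ring
  have D236 : (Matrix.of ![w 2, w 3, w 6]).det = w 6 0 := by
    rw [Matrix.det_fin_three]
    simp only [Matrix.of_apply, Matrix.cons_val', Matrix.cons_val_zero, Matrix.cons_val_one,
      Matrix.head_cons, Matrix.empty_val', Matrix.cons_val_fin_one, Matrix.head_fin_const,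
      Matrix.cons_val_two, Matrix.tail_cons, hw1', hw2', hw3']
    ring
  have D146 : (Matrix.of ![w 1, w 4, w 6]).det = w 4 1 * w 6 2 - w 4 2 * w 6 1 := by
    rw [Matrix.det_fin_three]
    simp only [Matrix.of_apply, Matrix.cons_val', Matrix.cons_val_zero, Matrix.cons_val_one,
      Matrix.head_cons, Matrix.empty_val', Matrix.cons_val_fin_one, Matrix.head_fin_const,
      Matrix.cons_val_two, Matrix.tail_cons, hw1', hw2', hw3']
    ring
  have D056 : (Matrix.of ![w 0, w 5, w 6]).det =
      w 0 0 * (w 5 1 * w 6 2 - w 5 2 * w 6 1) -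
      w 0 1 * (w 5 0 * w 6 2 - w 5 2 * w 6 0) +
      w 0 2 * (w 5 0 * w 6 1 - w 5 1 * w 6 0) := by
    rw [Matrix.det_fin_three]
    simp only [Matrix.of_apply, Matrix.cons_val', Matrix.cons_val_zero, Matrix.cons_val_one,
      Matrix.head_cons, Matrix.empty_val', Matrix.cons_val_fin_one, Matrix.head_fin_const,
      Matrix.cons_val_two, Matrix.tail_cons]
    ring
  have D124 : (Matrix.of ![w 1, w 2, w 4]).det = w 4 2 := by
    rw [Matrix.det_fin_three]
    simp only [Matrix.of_apply, Matrix.cons_val', Matrix.cons_val_zero, Matrix.cons_val_one,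
      Matrix.head_cons, Matrix.empty_val', Matrix.cons_val_fin_one, Matrix.head_fin_const,
      Matrix.cons_val_two, Matrix.tail_cons, hw1', hw2', hw3']
    ring
  have D023 : (Matrix.of ![w 0, w 2, w 3]).det = w 0 0 := by
    rw [Matrix.det_fin_three]
    simp only [Matrix.of_apply, Matrix.cons_val', Matrix.cons_val_zero, Matrix.cons_val_one,
      Matrix.head_cons, Matrix.empty_val', Matrix.cons_val_fin_one, Matrix.head_fin_const,
      Matrix.cons_val_two, Matrix.tail_cons, hw1', hw2', hw3']
    ring
  have D235 : (Matrix.of ![w 2, w 3, w 5]).det = w 5 0 := by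
    rw [Matrix.det_fin_three]
    simp only [Matrix.of_apply, Matrix.cons_val', Matrix.cons_val_zero, Matrix.cons_val_one,
      Matrix.head_cons, Matrix.empty_val', Matrix.cons_val_fin_one, Matrix.head_fin_const,
      Matrix.cons_val_two, Matrix.tail_cons, hw1', hw2', hw3']
    ring
  have D136 : (Matrix.of ![w 1, w 3, w 6]).det = -(w 6 1) := by
    rw [Matrix.det_fin_three]
    simp only [Matrix.of_apply, Matrix.cons_val', Matrix.cons_val_zero, Matrix.cons_val_one,
      Matrix.head_cons, Matrix.empty_val', Matrix.cons_val_fin_one, Matrix.head_fin_const,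
      Matrix.cons_val_two, Matrix.tail_cons, hw1', hw2', hw3']
    ring
  -- the resulting scalar equations
  have E1 : w 0 0 * (w 5 1 * w 6 2 - w 5 2 * w 6 1) -
      w 0 1 * (w 5 0 * w 6 2 - w 5 2 * w 6 0) +
      w 0 2 * (w 5 0 * w 6 1 - w 5 1 * w 6 0) = 0 := by
    rw [← D056]; exact wz 0 5 6 (by decide) (by decide) (by decide) (by decide)
  have E2 : -(w 0 0 * w 4 1) + w 0 1 * w 4 0 = 0 := by
    rw [← D034]; exact wz 0 3 4 (by decide) (by decide) (by decide) (by decide)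
  have E3 : w 4 2 * w 5 0 - w 4 0 * w 5 2 = 0 := by
    rw [← D245]; exact wz 2 4 5 (by decide) (by decide) (by decide) (by decide)
  have E4 : w 4 1 * w 6 2 - w 4 2 * w 6 1 = 0 := by
    rw [← D146]; exact wz 1 4 6 (by decide) (by decide) (by decide) (by decide)
  have E5 : w 0 2 = 0 := by
    rw [← D012]; exact wz 0 1 2 (by decide) (by decide) (by decide) (by decide)
  have E6 : -(w 5 1) = 0 := by
    rw [← D135]; exact wz 1 3 5 (by decide) (by decide) (by decide) (by decide)
  have E7 : w 6 0 = 0 := by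
    rw [← D236]; exact wz 2 3 6 (by decide) (by decide) (by decide) (by decide)
  have hc : w 4 2 ≠ 0 := by
    rw [← D124]; exact wn 1 2 4 (by decide) (by decide) (by decide) (by decide)
  have hx : w 0 0 ≠ 0 := by
    rw [← D023]; exact wn 0 2 3 (by decide) (by decide) (by decide) (by decide)
  have hp5 : w 5 0 ≠ 0 := by
    rw [← D235]; exact wn 2 3 5 (by decide) (by decide) (by decide) (by decide)
  have ht : w 6 1 ≠ 0 := by
    have hne : -(w 6 1) ≠ 0 := by
      rw [← D136]; exact wn 1 3 6 (by decide) (by decide) (by decide) (by decide)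
    exact fun h0 => hne (by rw [h0, neg_zero])
  -- the final contradiction: 2 = 0 in ℂ
  have hfin : 2 * w 4 2 * w 0 0 * w 5 0 * w 6 1 = 0 := by
    linear_combination (w 0 0 * w 6 1) * E3 - (w 0 0 * w 5 0) * E4 -
      (w 5 0 * w 6 2) * E2 - w 4 0 * E1 + (-(w 4 0 * w 0 0 * w 6 2)) * E6 +
      (w 4 0 * w 0 1 * w 5 2) * E7 + (w 4 0 * w 5 0 * w 6 1) * E5 +
      (w 4 0 * w 0 2 * w 6 0) * E6
  exact (mul_ne_zero (mul_ne_zero (mul_ne_zero (mul_ne_zero two_ne_zero hc) hx) hp5) ht) hfin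
end

section
/- The automorphism group of the Fano plane has order 168 and is isomorphic to GL(3, 𝔽₂). -/
/-- Points of the Fano plane: the nonzero vectors of `𝔽₂³`. -/
def FanoPt : Type := {v : Fin 3 → ZMod 2 // v ≠ 0}

/-- Lines of the Fano plane: sets `{u, v, w}` of three distinct nonzero vectors summing
to zero (equivalently, `{u, v, u + v}`). -/
def IsFanoLine (s : Set FanoPt) : Prop :=
  ∃ u v w : FanoPt, u ≠ v ∧ v ≠ w ∧ u ≠ w ∧
    u.1 + v.1 + w.1 = 0 ∧ s = {u, v, w}

/-- The collineations of the Fano plane: permutations of the points carrying lines to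
lines. This is a submonoid of the symmetric group (and in fact a group). -/
def fanoAut : Submonoid (Equiv.Perm FanoPt) where
  carrier := {σ | ∀ s : Set FanoPt, IsFanoLine s → IsFanoLine (σ '' s)}
  one_mem' := by
    intro s hs
    simpa using hs
  mul_mem' := by
    intro a b ha hb s hs
    rw [show ⇑(a * b) = ⇑a ∘ ⇑b from rfl, Set.image_comp]
    exact ha _ (hb _ hs)

namespace FanoAux

open Matrix

instance : DecidableEq FanoPt := by unfold FanoPt; infer_instance

abbrev V : Type := Fin 3 → ZMod 2

lemma V.add_self (x : V) : x + x = 0 := by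
  funext i
  have : ∀ a : ZMod 2, a + a = 0 := by decide
  exact this (x i)

lemma V.add_eq_zero_iff {x y : V} : x + y = 0 ↔ x = y := by
  constructor
  · intro h
    have := congrArg (fun z => x + z) h.symm
    simpa [← add_assoc, V.add_self] using this
  · rintro rfl; exact V.add_self x

lemma triple_sum {α G : Type*} [DecidableEq α] [AddCommMonoid G] (f : α → G)
    {x y z a b c : α} (hxy : x ≠ y) (hyz : y ≠ z) (hxz : x ≠ z)
    (hab : a ≠ b) (hbc : b ≠ c) (hac : a ≠ c)
    (h : ({x, y, z} : Set α) = {a, b, c}) :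
    f x + f y + f z = f a + f b + f c := by
  have h' : ({x, y, z} : Finset α) = {a, b, c} := by
    apply Finset.coe_injective
    simpa using h
  have h1 : ∑ i ∈ ({x, y, z} : Finset α), f i = f x + (f y + f z) := by
    rw [Finset.sum_insert (by simp [hxy, hxz]), Finset.sum_insert (by simp [hyz]),
      Finset.sum_singleton]
  have h2 : ∑ i ∈ ({a, b, c} : Finset α), f i = f a + (f b + f c) := by
    rw [Finset.sum_insert (by simp [hab, hac]), Finset.sum_insert (by simp [hbc]),
      Finset.sum_singleton]
  rw [add_assoc, add_assoc, ← h1, ← h2, h']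

lemma key {σ : Equiv.Perm FanoPt} (hσ : σ ∈ fanoAut) (u v w : FanoPt)
    (huv : u ≠ v) (hw : w.1 = u.1 + v.1) :
    (σ w).1 = (σ u).1 + (σ v).1 := by
  have hvw : v ≠ w := by
    intro h
    apply u.2
    have : v.1 = u.1 + v.1 := by rw [← hw, h]
    have h2 := congrArg (fun z => z + v.1) this
    simpa [add_assoc, V.add_self] using h2.symm
  have huw : u ≠ w := by
    intro h
    apply v.2
    have : u.1 = u.1 + v.1 := by rw [← hw, h]
    have h2 := congrArg (fun z => u.1 + z) this.symm
    simpa [← add_assoc, V.add_self] using h2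
  have hsum : u.1 + v.1 + w.1 = 0 := by rw [hw]; exact V.add_self _
  have hl : IsFanoLine {u, v, w} := ⟨u, v, w, huv, hvw, huw, hsum, rfl⟩
  obtain ⟨a, b, c, hab, hbc, hac, hsum', heq⟩ := hσ _ hl
  have himg : σ '' {u, v, w} = {σ u, σ v, σ w} := by
    simp [Set.image_insert_eq]
  rw [himg] at heq
  have hd1 : σ u ≠ σ v := fun h => huv (σ.injective h)
  have hd2 : σ v ≠ σ w := fun h => hvw (σ.injective h)
  have hd3 : σ u ≠ σ w := fun h => huw (σ.injective h)
  have hsum2 : (σ u).1 + (σ v).1 + (σ w).1 = 0 := by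
    have := triple_sum (fun p : FanoPt => p.1) hd1 hd2 hd3 hab hbc hac heq
    rw [this, hsum']
  exact (V.add_eq_zero_iff.mp hsum2).symm

/-- The lift of a collineation to `𝔽₂³`, fixing `0`. -/
noncomputable def F (σ : Equiv.Perm FanoPt) : V → V :=
  fun v => if h : v = 0 then 0 else (σ ⟨v, h⟩).1

lemma F_zero (σ : Equiv.Perm FanoPt) : F σ 0 = 0 := dif_pos rfl

lemma F_ne (σ : Equiv.Perm FanoPt) (v : V) (h : v ≠ 0) : F σ v = (σ ⟨v, h⟩).1 :=
  dif_neg h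

lemma F_add {σ : Equiv.Perm FanoPt} (hσ : σ ∈ fanoAut) (u v : V) :
    F σ (u + v) = F σ u + F σ v := by
  by_cases hu : u = 0
  · simp [hu, F_zero]
  by_cases hv : v = 0
  · simp [hv, F_zero]
  by_cases huv : u + v = 0
  · have : u = v := V.add_eq_zero_iff.mp huv
    subst this
    rw [huv, F_zero, F_ne σ u hu, V.add_self]
  · have hne : (⟨u, hu⟩ : FanoPt) ≠ ⟨v, hv⟩ := by
      intro h
      apply huv
      have : u = v := congrArg Subtype.val h
      rw [this]; exact V.add_self v
    have := key hσ ⟨u, hu⟩ ⟨v, hv⟩ ⟨u + v, huv⟩ hne rfl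
    rw [F_ne σ _ huv, F_ne σ u hu, F_ne σ v hv]
    exact this

/-- The lift as a linear map. -/
noncomputable def Flin {σ : Equiv.Perm FanoPt} (hσ : σ ∈ fanoAut) : V →ₗ[ZMod 2] V where
  toFun := F σ
  map_add' := F_add hσ
  map_smul' := by
    intro c x
    have : ∀ c : ZMod 2, c = 0 ∨ c = 1 := by decide
    rcases this c with rfl | rfl
    · simp [F_zero]
    · simp

lemma Flin_inj {σ : Equiv.Perm FanoPt} (hσ : σ ∈ fanoAut) :
    Function.Injective (Flin hσ) := by
  intro x y h
  simp only [Flin, LinearMap.coe_mk, AddHom.coe_mk] at h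
  by_cases hx : x = 0
  · by_cases hy : y = 0
    · rw [hx, hy]
    · exfalso
      rw [hx, F_zero, F_ne σ y hy] at h
      exact (σ ⟨y, hy⟩).2 h.symm
  · by_cases hy : y = 0
    · exfalso
      rw [hy, F_zero, F_ne σ x hx] at h
      exact (σ ⟨x, hx⟩).2 h
    · rw [F_ne σ x hx, F_ne σ y hy] at h
      have := σ.injective (Subtype.ext h)
      exact congrArg Subtype.val this

lemma Flin_bij {σ : Equiv.Perm FanoPt} (hσ : σ ∈ fanoAut) :
    Function.Bijective (Flin hσ) :=
  ⟨Flin_inj hσ, (LinearMap.injective_iff_surjective).mp (Flin_inj hσ)⟩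

/-- The action of `GL(3,𝔽₂)` on Fano points. -/
def glAct (A : GL (Fin 3) (ZMod 2)) : Equiv.Perm FanoPt where
  toFun v := ⟨(A : Matrix (Fin 3) (Fin 3) (ZMod 2)) *ᵥ v.1, by
    intro h0
    apply v.2
    have := congrArg (fun w => A.inv *ᵥ w) h0
    simp only [Matrix.mulVec_mulVec, A.inv_val, Matrix.one_mulVec, Matrix.mulVec_zero] at this
    exact this⟩
  invFun v := ⟨A.inv *ᵥ v.1, by
    intro h0
    apply v.2
    have := congrArg (fun w => (A : Matrix (Fin 3) (Fin 3) (ZMod 2)) *ᵥ w) h0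
    simp only [Matrix.mulVec_mulVec, A.val_inv, Matrix.one_mulVec, Matrix.mulVec_zero] at this
    exact this⟩
  left_inv v := by
    apply Subtype.ext
    show A.inv *ᵥ ((A : Matrix (Fin 3) (Fin 3) (ZMod 2)) *ᵥ v.1) = v.1
    rw [Matrix.mulVec_mulVec, A.inv_val, Matrix.one_mulVec]
  right_inv v := by
    apply Subtype.ext
    show (A : Matrix (Fin 3) (Fin 3) (ZMod 2)) *ᵥ (A.inv *ᵥ v.1) = v.1
    rw [Matrix.mulVec_mulVec, A.val_inv, Matrix.one_mulVec]

lemma glAct_mem (A : GL (Fin 3) (ZMod 2)) : glAct A ∈ fanoAut := by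
  intro s hs
  obtain ⟨u, v, w, huv, hvw, huw, hsum, rfl⟩ := hs
  refine ⟨glAct A u, glAct A v, glAct A w, ?_, ?_, ?_, ?_, ?_⟩
  · exact fun h => huv ((glAct A).injective h)
  · exact fun h => hvw ((glAct A).injective h)
  · exact fun h => huw ((glAct A).injective h)
  · show (A : Matrix (Fin 3) (Fin 3) (ZMod 2)) *ᵥ u.1 + _ *ᵥ v.1 + _ *ᵥ w.1 = 0
    rw [← Matrix.mulVec_add, ← Matrix.mulVec_add, hsum, Matrix.mulVec_zero]
  · rw [Set.image_insert_eq, Set.image_insert_eq, Set.image_singleton]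

lemma glAct_inj : Function.Injective glAct := by
  intro A B h
  have hv : ∀ v : V, (A : Matrix (Fin 3) (Fin 3) (ZMod 2)) *ᵥ v
      = (B : Matrix (Fin 3) (Fin 3) (ZMod 2)) *ᵥ v := by
    intro v
    by_cases hv0 : v = 0
    · rw [hv0, Matrix.mulVec_zero, Matrix.mulVec_zero]
    · have := congrArg (fun σ : Equiv.Perm FanoPt => (σ ⟨v, hv0⟩).1) h
      exact this
  ext i j
  have hM : (A : Matrix (Fin 3) (Fin 3) (ZMod 2)) = B := by
    have : Matrix.toLin' (A : Matrix (Fin 3) (Fin 3) (ZMod 2))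
        = Matrix.toLin' (B : Matrix (Fin 3) (Fin 3) (ZMod 2)) := by
      apply LinearMap.ext
      intro v
      rw [Matrix.toLin'_apply, Matrix.toLin'_apply]
      exact hv v
    exact Matrix.toLin'.injective this
  rw [hM]

lemma glAct_surj {σ : Equiv.Perm FanoPt} (hσ : σ ∈ fanoAut) :
    ∃ A : GL (Fin 3) (ZMod 2), glAct A = σ := by
  classical
  let E : V ≃ₗ[ZMod 2] V := LinearEquiv.ofBijective (Flin hσ) (Flin_bij hσ)
  let M : Matrix (Fin 3) (Fin 3) (ZMod 2) := LinearMap.toMatrix' (Flin hσ)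
  let N : Matrix (Fin 3) (Fin 3) (ZMod 2) :=
    LinearMap.toMatrix' (E.symm : V →ₗ[ZMod 2] V)
  have hMN : M * N = 1 := by
    rw [show M * N = LinearMap.toMatrix' ((Flin hσ).comp (E.symm : V →ₗ[ZMod 2] V)) from
      (LinearMap.toMatrix'_comp _ _).symm]
    rw [show (Flin hσ).comp (E.symm : V →ₗ[ZMod 2] V) = LinearMap.id from
      LinearMap.ext fun x => E.apply_symm_apply x]
    exact LinearMap.toMatrix'_id
  have hNM : N * M = 1 := by
    rw [show N * M = LinearMap.toMatrix' ((E.symm : V →ₗ[ZMod 2] V).comp (Flin hσ)) from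
      (LinearMap.toMatrix'_comp _ _).symm]
    rw [show (E.symm : V →ₗ[ZMod 2] V).comp (Flin hσ) = LinearMap.id from
      LinearMap.ext fun x => E.symm_apply_apply x]
    exact LinearMap.toMatrix'_id
  refine ⟨⟨M, N, hMN, hNM⟩, ?_⟩
  ext v
  apply Subtype.ext
  show M *ᵥ v.1 = (σ v).1
  have h1 : M *ᵥ v.1 = Flin hσ v.1 := by
    rw [← Matrix.toLin'_apply, Matrix.toLin'_toMatrix']
  rw [h1]
  show F σ v.1 = (σ v).1
  rw [F_ne σ v.1 v.2]
  exact congrArg Subtype.val (congrArg σ (Subtype.ext rfl))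

end FanoAux

open Matrix FanoAux in
/-- The automorphism group of the Fano plane has order 168 and is isomorphic to
`GL(3, 𝔽₂)`. -/
theorem stmt17 :
    Nat.card fanoAut = 168 ∧ Nonempty (fanoAut ≃* GL (Fin 3) (ZMod 2)) := by
  have hbij : Function.Bijective (fun A : GL (Fin 3) (ZMod 2) =>
      (⟨glAct A, glAct_mem A⟩ : fanoAut)) := by
    constructor
    · intro A B h
      exact glAct_inj (congrArg Subtype.val h)
    · rintro ⟨σ, hσ⟩
      obtain ⟨A, hA⟩ := glAct_surj hσ
      exact ⟨A, Subtype.ext hA⟩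
  let e : GL (Fin 3) (ZMod 2) ≃ fanoAut := Equiv.ofBijective _ hbij
  have hmul : ∀ A B : GL (Fin 3) (ZMod 2), e (A * B) = e A * e B := by
    intro A B
    apply Subtype.ext
    apply Equiv.ext
    intro v
    apply Subtype.ext
    show (↑(A * B) : Matrix (Fin 3) (Fin 3) (ZMod 2)) *ᵥ v.1 = _
    simp [e, Equiv.ofBijective, glAct, Matrix.mulVec_mulVec]
    exact (Matrix.mulVec_mulVec _ _ _).symm
  have me : GL (Fin 3) (ZMod 2) ≃* fanoAut := MulEquiv.mk' e hmul
  constructor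
  · rw [← Nat.card_congr me.toEquiv, Matrix.card_GL_field]
    rw [ZMod.card 2]
    decide
  · exact ⟨me.symm⟩
end
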